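/- Quasi-monotonic functions have unique factorizations of the form d_α ∘ u_β: if α, α' are multi-indices of dimension ≤ m and β, β' are multi-indices of dimension ≤ n such that d_α ∘ u_β and d_{α'} ∘ u_{β'} are both defined as maps [n] → [m] and d_α ∘ u_β = d_{α'} ∘ u_{β'}, then α = α' and β = β'. -/

import Mathlib

/-- The elementary coface `d_i^{(n+1)} : [n] → [n+1]` (monotonic injection omitting `i`):
`k ↦ k` for `k < i` and `k ↦ k+1` for `k ≥ i`. -/
def dMap (n i : ℕ) : Fin (n + 1) → Fin (n + 2) :=
  fun k => if (k : ℕ) < i then ⟨k, by omega⟩ else ⟨(k : ℕ) + 1, by omega⟩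

/-- The elementary quasi-codegeneracy `u_i^{(n)} : [n+1] → [n]`:
`u_i 0 = u_i i = 0`, `u_i k = k` for `1 ≤ k ≤ i-1`, and `u_i k = k-1` for `k > i`. -/
def uMap (n i : ℕ) : Fin (n + 2) → Fin (n + 1) :=
  fun k => if (k : ℕ) = 0 ∨ (k : ℕ) = i then 0
    else if h : (k : ℕ) < i ∧ (k : ℕ) < n + 1 then ⟨k, h.2⟩
    else ⟨(k : ℕ) - 1, by omega⟩

/-- A function `f : [n] → [m]` is quasi-monotonic if `f 0 = 0` and `f` is strictly
monotonic outside the preimage of `0`. -/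
def QuasiMonotonic {n m : ℕ} (f : Fin (n + 1) → Fin (m + 1)) : Prop :=
  f 0 = 0 ∧ ∀ p q : Fin (n + 1), p < q → f p ≠ 0 → f q ≠ 0 → f p < f q

/-- A multi-index of dimension `≤ n`: a strictly increasing sequence of indices
`i_1 < … < i_k` with `1 ≤ i_p ≤ n` for all `p` (its length is `α.length`). -/
def IsMultiIndex (n : ℕ) (α : List ℕ) : Prop :=
  List.Chain' (· < ·) α ∧ ∀ i ∈ α, 1 ≤ i ∧ i ≤ n

/-- The quasi-codegeneracy `u_α = u_{i_1} ∘ u_{i_2} ∘ ⋯ ∘ u_{i_k} : [n] → [n-k]`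
associated to a multi-index `α = (i_1, …, i_k)`; each elementary factor is taken at the
appropriate dimension (`u_{i_k}` is applied first, at the highest dimension). -/
def uComp (n : ℕ) : (α : List ℕ) → α.length ≤ n → Fin (n + 1) → Fin (n - α.length + 1)
  | [], _ => fun k => k
  | i :: rest, h => fun k =>
      Fin.cast (by simp only [List.length_cons] at h ⊢; omega)
        (uMap (n - rest.length - 1) i
          (Fin.cast (by simp only [List.length_cons] at h; omega)
            (uComp n rest (by simp only [List.length_cons] at h; omega) k)))

/-- The coface `d_α = d_{i_k} ∘ d_{i_{k-1}} ∘ ⋯ ∘ d_{i_1} : [n-k] → [n]`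
associated to a multi-index `α = (i_1, …, i_k)`; each elementary factor is taken at the
appropriate dimension (`d_{i_1}` is applied first, at the lowest dimension). -/
def dComp (n : ℕ) : (α : List ℕ) → α.length ≤ n → Fin (n - α.length + 1) → Fin (n + 1)
  | [], _ => fun k => k
  | i :: rest, h => fun k =>
      dComp n rest (by simp only [List.length_cons] at h; omega)
        (Fin.cast (by simp only [List.length_cons] at h; omega)
          (dMap (n - rest.length - 1) i
            (Fin.cast (by simp only [List.length_cons] at h ⊢; omega) k)))

/-!
The map `f = d_α ∘ u_β` vanishes exactly at `0` and at the entries of `β`, and its image is `[m]`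
minus the entries of `α`: every value avoided by `d_α` is hit, because `u_β ∘ d_β = id`.
A strictly increasing list is determined by its set of entries, so `f` determines `α` and `β`.
We compute with ℕ-valued versions of the maps, in which the dimension bookkeeping disappears.
-/

def uNat (i k : ℕ) : ℕ := if k = 0 ∨ k = i then 0 else if k < i then k else k - 1

def dNat (i k : ℕ) : ℕ := if k < i then k else k + 1

def uCompNat : List ℕ → ℕ → ℕ
  | [], k => k
  | i :: β, k => uNat i (uCompNat β k)

def dCompNat : List ℕ → ℕ → ℕ
  | [], k => k
  | i :: α, k => dCompNat α (dNat i k)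

theorem val_dMap (N i : ℕ) (k : Fin (N + 1)) : (dMap N i k : ℕ) = dNat i k := by
  unfold dMap dNat
  split_ifs <;> rfl

theorem val_uMap {N i : ℕ} (hi : i ≤ N + 1) (k : Fin (N + 2)) : (uMap N i k : ℕ) = uNat i k := by
  unfold uMap uNat
  split_ifs <;> grind

theorem uNat_eq_zero_iff {i : ℕ} (hi : 0 < i) (k : ℕ) : uNat i k = 0 ↔ k = 0 ∨ k = i := by
  unfold uNat
  split_ifs <;> omega

theorem uNat_eq_iff_of_lt {i j : ℕ} (hj : 0 < j) (hji : j < i) (k : ℕ) :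
    uNat i k = j ↔ k = j := by
  unfold uNat
  split_ifs <;> omega

theorem uNat_dNat {i : ℕ} (hi : 0 < i) (k : ℕ) : uNat i (dNat i k) = k := by
  grind [uNat, dNat]

theorem dNat_eq_iff_of_lt {i j : ℕ} (hji : j < i) (k : ℕ) : dNat i k = j ↔ k = j := by
  unfold dNat
  split_ifs <;> omega

theorem dNat_ne (i k : ℕ) : dNat i k ≠ i := by
  unfold dNat
  split_ifs <;> omega

theorem dNat_le (i k : ℕ) : dNat i k ≤ k + 1 := by
  unfold dNat
  split_ifs <;> omega

theorem uCompNat_eq_iff_of_lt {j : ℕ} (hj : 0 < j) :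
    ∀ {β : List ℕ}, (∀ b ∈ β, j < b) → ∀ k, uCompNat β k = j ↔ k = j
  | [], _, _ => Iff.rfl
  | i :: β, hβ, k => by
    rw [uCompNat, uNat_eq_iff_of_lt hj (hβ i (by simp)),
      uCompNat_eq_iff_of_lt hj fun b hb => hβ b (by simp [hb])]

theorem uCompNat_eq_zero_iff : ∀ {β : List ℕ}, β.Pairwise (· < ·) → (∀ b ∈ β, 0 < b) →
    ∀ k, uCompNat β k = 0 ↔ k = 0 ∨ k ∈ β
  | [], _, _, _ => by simp [uCompNat]
  | i :: β, hsort, hpos, k => by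
    obtain ⟨hlt, hsort⟩ := List.pairwise_cons.mp hsort
    have hi : 0 < i := hpos i (by simp)
    rw [uCompNat, uNat_eq_zero_iff hi, uCompNat_eq_iff_of_lt hi hlt,
      uCompNat_eq_zero_iff hsort fun b hb => hpos b (by simp [hb]), List.mem_cons]
    tauto

theorem uCompNat_dCompNat : ∀ {β : List ℕ}, (∀ b ∈ β, 0 < b) → ∀ k, uCompNat β (dCompNat β k) = k
  | [], _, _ => rfl
  | i :: β, hpos, k => by
    rw [dCompNat, uCompNat, uCompNat_dCompNat fun b hb => hpos b (by simp [hb]),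
      uNat_dNat (hpos i (by simp))]

theorem dCompNat_le : ∀ (α : List ℕ) (k : ℕ), dCompNat α k ≤ k + α.length
  | [], _ => le_rfl
  | i :: α, k => by
    have := dCompNat_le α (dNat i k)
    have := dNat_le i k
    rw [dCompNat, List.length_cons]
    omega

theorem dCompNat_eq_iff_of_lt {j : ℕ} :
    ∀ {α : List ℕ}, (∀ a ∈ α, j < a) → ∀ k, dCompNat α k = j ↔ k = j
  | [], _, _ => Iff.rfl
  | i :: α, hα, k => by
    rw [dCompNat, dCompNat_eq_iff_of_lt fun a ha => hα a (by simp [ha]),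
      dNat_eq_iff_of_lt (hα i (by simp))]

theorem dCompNat_notMem : ∀ {α : List ℕ}, α.Pairwise (· < ·) → ∀ k, dCompNat α k ∉ α
  | [], _, _ => List.not_mem_nil
  | i :: α, hsort, k => by
    obtain ⟨hlt, hsort⟩ := List.pairwise_cons.mp hsort
    rw [dCompNat, List.mem_cons, not_or, dCompNat_eq_iff_of_lt hlt]
    exact ⟨dNat_ne i k, dCompNat_notMem hsort _⟩

namespace IsMultiIndex

variable {n i : ℕ} {α : List ℕ}

theorem pairwise (h : IsMultiIndex n α) : α.Pairwise (· < ·) :=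
  List.isChain_iff_pairwise.mp h.1

theorem tail (h : IsMultiIndex n (i :: α)) : IsMultiIndex n α :=
  ⟨h.1.tail, fun j hj => h.2 j (List.mem_cons_of_mem i hj)⟩

theorem head_add_length_le (h : IsMultiIndex n (i :: α)) : i + α.length ≤ n := by
  obtain ⟨hlt, hsort⟩ := List.pairwise_cons.mp h.pairwise
  have hsub : α.toFinset ⊆ Finset.Ioc i n := fun j hj => by
    rw [List.mem_toFinset] at hj
    exact Finset.mem_Ioc.mpr ⟨hlt j hj, (h.2 j (List.mem_cons_of_mem i hj)).2⟩
  have hcard := Finset.card_le_card hsub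
  rw [List.toFinset_card_of_nodup hsort.nodup, Nat.card_Ioc] at hcard
  have hin := (h.2 i List.mem_cons_self).2
  omega

theorem length_le (h : IsMultiIndex n α) : α.length ≤ n := by
  cases α with
  | nil => exact Nat.zero_le n
  | cons i α =>
    have := h.head_add_length_le
    have := (h.2 i List.mem_cons_self).1
    rw [List.length_cons]
    omega

end IsMultiIndex

theorem val_dComp (m : ℕ) : ∀ (α : List ℕ) (hl : α.length ≤ m) (k : Fin (m - α.length + 1)),
    (dComp m α hl k : ℕ) = dCompNat α k
  | [], _, _ => rfl
  | i :: α, hl, k => by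
    rw [dComp, val_dComp, Fin.val_cast, val_dMap, Fin.val_cast, dCompNat]

theorem val_uComp {n : ℕ} : ∀ {β : List ℕ}, IsMultiIndex n β →
    ∀ (hl : β.length ≤ n) (k : Fin (n + 1)), (uComp n β hl k : ℕ) = uCompNat β k
  | [], _, _, _ => rfl
  | i :: β, hβ, hl, k => by
    have := hβ.head_add_length_le
    rw [uComp, Fin.val_cast, val_uMap (by omega), Fin.val_cast, val_uComp hβ.tail, uCompNat]

theorem exists_dCompNat_eq {m : ℕ} : ∀ {α : List ℕ}, IsMultiIndex m α →
    ∀ {j : ℕ}, j ≤ m → j ∉ α → ∃ k ≤ m - α.length, dCompNat α k = j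
  | [], _, j, hjm, _ => ⟨j, by simpa using hjm, rfl⟩
  | i :: α, hα, _, hjm, hj => by
    rw [List.mem_cons, not_or] at hj
    obtain ⟨x, hx, rfl⟩ := exists_dCompNat_eq hα.tail hjm hj.2
    have hxi : x ≠ i := by
      rintro rfl
      exact hj.1 ((dCompNat_eq_iff_of_lt (List.pairwise_cons.mp hα.pairwise).1 x).mpr rfl)
    have := hα.head_add_length_le
    rcases hxi.lt_or_gt with h | h
    · exact ⟨x, by rw [List.length_cons]; omega, by rw [dCompNat, (dNat_eq_iff_of_lt h x).mpr rfl]⟩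
    · refine ⟨x - 1, by rw [List.length_cons]; omega, ?_⟩
      rw [dCompNat, show dNat i (x - 1) = x by unfold dNat; split_ifs <;> omega]

theorem IsMultiIndex.mem_iff_dCompNat_uCompNat_eq_zero {m n : ℕ} {α β : List ℕ}
    (hα : IsMultiIndex m α) (hβ : IsMultiIndex n β) (j : ℕ) :
    j ∈ β ↔ 0 < j ∧ j ≤ n ∧ dCompNat α (uCompNat β j) = 0 := by
  rw [dCompNat_eq_iff_of_lt (fun a ha => (hα.2 a ha).1),
    uCompNat_eq_zero_iff hβ.pairwise (fun b hb => (hβ.2 b hb).1)]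
  constructor
  · intro hj
    exact ⟨(hβ.2 j hj).1, (hβ.2 j hj).2, Or.inr hj⟩
  · rintro ⟨hj, -, rfl | hmem⟩
    · exact absurd hj (lt_irrefl 0)
    · exact hmem

theorem IsMultiIndex.mem_iff_forall_dCompNat_uCompNat_ne {m n : ℕ} {α β : List ℕ}
    (hα : IsMultiIndex m α) (hβ : IsMultiIndex n β) (hc : m - α.length = n - β.length)
    (j : ℕ) : j ∈ α ↔ j ≤ m ∧ ∀ x ≤ n, dCompNat α (uCompNat β x) ≠ j := by
  constructor
  · intro hj
    exact ⟨(hα.2 j hj).2, fun x _ hx => dCompNat_notMem hα.pairwise _ (hx ▸ hj)⟩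
  · rintro ⟨hjm, hne⟩
    by_contra hj
    obtain ⟨k, hk, rfl⟩ := exists_dCompNat_eq hα hjm hj
    have := dCompNat_le β k
    have := hβ.length_le
    exact hne (dCompNat β k) (by omega)
      (by rw [uCompNat_dCompNat fun b hb => (hβ.2 b hb).1])

theorem factorization_unique (n m : ℕ) (α α' β β' : List ℕ)
    (hα : IsMultiIndex m α) (hα' : IsMultiIndex m α')
    (hβ : IsMultiIndex n β) (hβ' : IsMultiIndex n β')
    (hαl : α.length ≤ m) (hα'l : α'.length ≤ m)
    (hβl : β.length ≤ n) (hβ'l : β'.length ≤ n)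
    (hc : m - α.length = n - β.length) (hc' : m - α'.length = n - β'.length)
    (heq : (fun x : Fin (n + 1) =>
              dComp m α hαl (Fin.cast (by omega) (uComp n β hβl x)))
         = (fun x : Fin (n + 1) =>
              dComp m α' hα'l (Fin.cast (by omega) (uComp n β' hβ'l x)))) :
    α = α' ∧ β = β' := by
  have hf : ∀ x ≤ n, dCompNat α (uCompNat β x) = dCompNat α' (uCompNat β' x) := fun x hx => by
    simpa only [val_dComp, Fin.val_cast, val_uComp hβ, val_uComp hβ']
      using congrArg Fin.val (congrFun heq ⟨x, by omega⟩)
  constructor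
  · refine hα.pairwise.eq_of_mem_iff hα'.pairwise fun j => ?_
    rw [hα.mem_iff_forall_dCompNat_uCompNat_ne hβ hc,
      hα'.mem_iff_forall_dCompNat_uCompNat_ne hβ' hc']
    exact and_congr_right fun _ => forall₂_congr fun x hx => by rw [hf x hx]
  · refine hβ.pairwise.eq_of_mem_iff hβ'.pairwise fun j => ?_
    rw [hα.mem_iff_dCompNat_uCompNat_eq_zero hβ, hα'.mem_iff_dCompNat_uCompNat_eq_zero hβ']
    exact and_congr_right fun _ => and_congr_right fun hj => by rw [hf j hj]
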